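/- arXiv:2601.22183 — 2 statements merged into one kernel-verified Lean document; each statement's English description precedes it below -/
import Mathlib

section
/- Let d be a metric, q and l vertices, S a set of objects with M⁻ = min_{p∈S} d(l,p) and M⁺ = max_{p∈S} d(l,p), and let LB' and UB' satisfy LB' ≤ d(l,q) ≤ UB'. Define LB(q,S) = LB' - M⁺ if LB' ≥ M⁺, LB(q,S) = M⁻ - UB' if UB' ≤ M⁻, and LB(q,S) = 0 otherwise. Then LB(q,S) ≤ d(q,p) for all p ∈ S. -/
/-- Relaxed COL-Tree node lower bound (Eq. 7): replacing `d(l,q)` by any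
lower bound `LB'` and upper bound `UB'` still yields an admissible node
lower bound. -/
theorem relaxed_node_lower_bound {V : Type*} [MetricSpace V] (q l : V)
    (S : Finset V) (hS : S.Nonempty) (LB' UB' : ℝ)
    (hLB' : LB' ≤ dist l q) (hUB' : dist l q ≤ UB') :
    let Mm := S.inf' hS (fun p => dist l p)
    let Mp := S.sup' hS (fun p => dist l p)
    let LB := if Mp ≤ LB' then LB' - Mp
              else if UB' ≤ Mm then Mm - UB' else 0
    ∀ p ∈ S, LB ≤ dist q p := by
  intro Mm Mp LB p hp
  have h1 : dist l p ≤ Mp := Finset.le_sup' _ hp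
  have h2 : Mm ≤ dist l p := Finset.inf'_le _ hp
  have tri1 : dist l q ≤ dist l p + dist p q := dist_triangle l p q
  have tri2 : dist l p ≤ dist l q + dist q p := dist_triangle l q p
  have hd : dist p q = dist q p := dist_comm p q
  simp only [LB]
  split_ifs with hA hB
  · linarith
  · linarith
  · positivity
end

section
/- Let d be a metric, v a vertex outside subgraph S with border set B, L a landmark set, and for each l ∈ L let M^{B-}_l = min_{b∈B} d(l,b) and M^{B+}_l = max_{b∈B} d(l,b). Define LB_l(v,B) as in the node lower bound: LB_l(v,B) = d(l,v) - M^{B+}_l if d(l,v) ≥ M^{B+}_l, = M^{B-}_l - d(l,v) if d(l,v) ≤ M^{B-}_l, and 0 otherwise. Then max_{l∈L} LB_l(v,B) ≤ min_{b∈B} d(v,b) ≤ d(v,u) for every u ∈ S, where the last inequality holds whenever every path from v to u passes through B. -/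
/-- Border-set lower-bound optimization: the landmark-based node lower bound
to the border set `B` lower-bounds `min_{b∈B} d(v,b)`, which in turn
lower-bounds `d(v,u)` for any `u ∈ S` reached only through the border. -/
theorem border_set_landmark_lower_bound {V : Type*} [MetricSpace V]
    (v : V) (S : Set V) (B : Finset V) (hB : B.Nonempty) (hBS : (↑B : Set V) ⊆ S)
    (hv : v ∉ S) (L : Finset V) (hL : L.Nonempty) :
    (L.sup' hL (fun l =>
        let MBm := B.inf' hB (fun b => dist l b)
        let MBp := B.sup' hB (fun b => dist l b)
        if MBp ≤ dist l v then dist l v - MBp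
        else if dist l v ≤ MBm then MBm - dist l v else 0)
      ≤ B.inf' hB (fun b => dist v b)) ∧
    ∀ u ∈ S, (∃ b ∈ B, dist v u = dist v b + dist b u) →
      B.inf' hB (fun b => dist v b) ≤ dist v u := by
  constructor
  · apply Finset.sup'_le
    intro l hl
    apply Finset.le_inf'
    intro b hb
    simp only
    have h1 : dist l b ≤ B.sup' hB (fun b => dist l b) := Finset.le_sup' _ hb
    have h2 : B.inf' hB (fun b => dist l b) ≤ dist l b := Finset.inf'_le _ hb
    have t1 : dist l v ≤ dist l b + dist b v := dist_triangle l b v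
    have t2 : dist l b ≤ dist l v + dist v b := dist_triangle l v b
    have e : dist b v = dist v b := dist_comm b v
    split_ifs with h3 h4 <;> linarith
  · intro u hu ⟨b, hb, heq⟩
    have h2 : B.inf' hB (fun b => dist v b) ≤ dist v b := Finset.inf'_le _ hb
    have := dist_nonneg (x := b) (y := u)
    linarith
end
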